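/- If r_1 > 1 and r_{N−1} < 1, then ρ_A < 1/N implies ρ_B > 1/N, and ρ_B < 1/N implies ρ_A > 1/N; in particular ρ_A < 1/N and ρ_B < 1/N cannot both hold (the evolutionary scenario B, top arrows →←, bottom arrows ⇐⇒, is forbidden). -/

import Mathlib

/-!
Write `P j = ∏_{k ≤ j} r_k⁻¹`, so that `ρ_A = 1 / S` and `ρ_B = P_{N-1} / S` with
`S = ∑_{j=0}^{N-1} P j`. The gap `f_i - g_i` is affine in `i`, so `r_1 > 1 > r_{N-1}` forces it to
be decreasing: `r_i` crosses `1` once, `P` first decreases and then increases, and every `P j` is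
at most `max 1 P_{N-1}`, strictly so for `P 1 = r_1⁻¹`. Hence `S < N · max 1 P_{N-1}`, which is
`ρ_A > 1/N` or `ρ_B > 1/N` according to which term realises the maximum.
-/

open Finset

section Products

variable {r : ℕ → ℝ} {n : ℕ}

theorem prod_inv_le_one {j : ℕ} (h : ∀ k ∈ Icc 1 j, 1 ≤ r k) :
    ∏ k ∈ Icc 1 j, (r k)⁻¹ ≤ 1 :=
  prod_le_one (fun k hk => inv_nonneg.2 (zero_le_one.trans (h k hk)))
    fun k hk => inv_le_one_of_one_le₀ (h k hk)

theorem prod_inv_le_prod_inv {j : ℕ} (hjn : j ≤ n) (hpos : ∀ k ∈ Icc 1 n, 0 < r k)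
    (hle : ∀ k ∈ Icc 1 n, j < k → r k ≤ 1) :
    ∏ k ∈ Icc 1 j, (r k)⁻¹ ≤ ∏ k ∈ Icc 1 n, (r k)⁻¹ := by
  refine prod_le_prod_of_subset_of_one_le (Icc_subset_Icc_right hjn)
    (fun k hk => (inv_pos.2 (hpos k (Icc_subset_Icc_right hjn hk))).le) fun k hk hkj => ?_
  have hjk : j < k := by simp only [mem_Icc] at hk hkj; omega
  exact (one_le_inv₀ (hpos k hk)).2 (hle k hk hjk)

theorem prod_inv_le_max (hpos : ∀ k ∈ Icc 1 n, 0 < r k)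
    (hstay : ∀ k k', 1 ≤ k → k ≤ k' → k' ≤ n → r k < 1 → r k' < 1) {j : ℕ} (hjn : j ≤ n) :
    ∏ k ∈ Icc 1 j, (r k)⁻¹ ≤ max 1 (∏ k ∈ Icc 1 n, (r k)⁻¹) := by
  by_cases hdrop : ∃ k₀ ∈ Icc 1 j, r k₀ < 1
  · obtain ⟨k₀, hk₀, hrk₀⟩ := hdrop
    rw [mem_Icc] at hk₀
    refine le_max_of_le_right (prod_inv_le_prod_inv hjn hpos fun k hk hjk => ?_)
    rw [mem_Icc] at hk
    exact (hstay k₀ k hk₀.1 (by omega) hk.2 hrk₀).le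
  · push Not at hdrop
    exact le_max_of_le_left (prod_inv_le_one hdrop)

end Products

theorem one_add_sum_lt_mul {P : ℕ → ℝ} {n : ℕ} {M : ℝ} (hM : 1 ≤ M)
    (hle : ∀ j ∈ Icc 1 n, P j ≤ M) (hlt : ∃ j ∈ Icc 1 n, P j < M) :
    1 + ∑ j ∈ Icc 1 n, P j < (n + 1) * M := by
  have hsum : ∑ j ∈ Icc 1 n, P j < ∑ _j ∈ Icc 1 n, M := sum_lt_sum hle hlt
  rw [sum_const, Nat.card_Icc, nsmul_eq_mul, Nat.add_sub_cancel] at hsum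
  linarith

theorem one_sub_div_sum_Icc_pred {P : ℕ → ℝ} {n : ℕ} (hn : 1 ≤ n)
    (hS : 1 + ∑ j ∈ Icc 1 n, P j ≠ 0) :
    1 - (1 + ∑ j ∈ Icc 1 (n - 1), P j) / (1 + ∑ j ∈ Icc 1 n, P j) =
      P n / (1 + ∑ j ∈ Icc 1 n, P j) := by
  obtain ⟨m, rfl⟩ : ∃ m, n = m + 1 := ⟨n - 1, by omega⟩
  rw [Nat.add_sub_cancel]
  rw [sum_Icc_succ_top (by omega)] at hS ⊢
  field_simp
  ring

theorem one_div_lt_or_one_div_lt {x S p : ℝ} (hx : 0 < x) (hS : 0 < S)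
    (h : S < x * max 1 p) : 1 / x < 1 / S ∨ 1 / x < p / S := by
  rcases le_total p 1 with hp | hp
  · rw [max_eq_left hp, mul_one] at h
    exact .inl (one_div_lt_one_div_of_lt hS h)
  · rw [max_eq_right hp] at h
    exact .inr (by rw [div_lt_div_iff₀ hx hS]; linarith)

theorem lt_one_of_lt_one_of_affine_gap {r F G : ℕ → ℝ} {s : ℝ} {n : ℕ}
    (hr : ∀ i, 1 ≤ i → i ≤ n → r i = F i / G i) (hG : ∀ i, 1 ≤ i → i ≤ n → 0 < G i)
    (hgap : ∀ k k' : ℕ, (F k' - G k') - (F k - G k) = s * ((k' : ℝ) - k))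
    (hn : 1 ≤ n) (h1 : 1 < r 1) (hrn : r n < 1) :
    ∀ k k', 1 ≤ k → k ≤ k' → k' ≤ n → r k < 1 → r k' < 1 := by
  have hlt : ∀ i, 1 ≤ i → i ≤ n → (r i < 1 ↔ F i < G i) := fun i h1 h2 => by
    rw [hr i h1 h2, div_lt_one (hG i h1 h2)]
  have hgap1 : G 1 < F 1 := by rwa [hr 1 le_rfl hn, one_lt_div (hG 1 le_rfl hn)] at h1
  have hgapn : F n < G n := (hlt n hn le_rfl).1 hrn
  have hs : s < 0 := by
    have hn1 : (1 : ℝ) ≤ n := by exact_mod_cast hn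
    have := hgap 1 n
    push_cast at this
    nlinarith
  intro k k' hk hkk' hk' hrk
  have hkk'R : (k : ℝ) ≤ k' := by exact_mod_cast hkk'
  have hgapk := (hlt k hk (hkk'.trans hk')).1 hrk
  have := hgap k k'
  exact (hlt k' (hk.trans hkk') hk').2 (by nlinarith)

section Payoffs

variable {N : ℕ} {a b c d w : ℝ}

noncomputable def fitnessA (N : ℕ) (a b w : ℝ) (i : ℕ) : ℝ :=
  1 - w + w * (a * ((i : ℝ) - 1) / ((N : ℝ) - 1) + b * ((N : ℝ) - (i : ℝ)) / ((N : ℝ) - 1))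

noncomputable def fitnessB (N : ℕ) (c d w : ℝ) (i : ℕ) : ℝ :=
  1 - w + w * (c * (i : ℝ) / ((N : ℝ) - 1) + d * ((N : ℝ) - (i : ℝ) - 1) / ((N : ℝ) - 1))

theorem fitnessB_pos (hc : 0 < c) (hd : 0 ≤ d) (hw0 : 0 ≤ w) (hw1 : w ≤ 1) {i : ℕ}
    (hi : 1 ≤ i) (hiN : i < N) : 0 < fitnessB N c d w i := by
  have hi' : (1 : ℝ) ≤ i := by exact_mod_cast hi
  have hiN' : (i : ℝ) + 1 ≤ N := by exact_mod_cast hiN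
  have hpay : 0 < c * (i : ℝ) / ((N : ℝ) - 1) + d * ((N : ℝ) - (i : ℝ) - 1) / ((N : ℝ) - 1) := by
    have hN : (0 : ℝ) < N - 1 := by linarith
    have : 0 ≤ d * ((N : ℝ) - (i : ℝ) - 1) := mul_nonneg hd (by linarith)
    positivity
  unfold fitnessB
  rcases hw0.eq_or_lt with rfl | hw
  · simp
  · nlinarith [mul_pos hw hpay]

theorem fitness_gap_sub (k k' : ℕ) :
    (fitnessA N a b w k' - fitnessB N c d w k') - (fitnessA N a b w k - fitnessB N c d w k) =
      w * (a - b - c + d) / ((N : ℝ) - 1) * ((k' : ℝ) - k) := by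
  unfold fitnessA fitnessB
  ring

end Payoffs

theorem moran_mutual_invasion_forbidden_scenario_general
    (N : ℕ) (hN : 3 ≤ N) (a b c d w : ℝ)
    (hc : 0 < c) (hd : 0 < d)
    (hw0 : 0 ≤ w) (hw1 : w ≤ 1)
    (r : ℕ → ℝ)
    (hr : ∀ i, 1 ≤ i → i ≤ N - 1 →
      r i = (1 - w + w * (a * ((i : ℝ) - 1) / ((N : ℝ) - 1) +
                b * ((N : ℝ) - (i : ℝ)) / ((N : ℝ) - 1))) /
            (1 - w + w * (c * (i : ℝ) / ((N : ℝ) - 1) +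
                d * ((N : ℝ) - (i : ℝ) - 1) / ((N : ℝ) - 1))))
    (hrpos : ∀ i, 1 ≤ i → i ≤ N - 1 → 0 < r i)
    (π : ℕ → ℝ)
    (hπ : ∀ i, 1 ≤ i → i ≤ N - 1 →
      π i = (1 + ∑ j ∈ Finset.Icc 1 (i - 1), ∏ k ∈ Finset.Icc 1 j, (r k)⁻¹) /
            (1 + ∑ j ∈ Finset.Icc 1 (N - 1), ∏ k ∈ Finset.Icc 1 j, (r k)⁻¹))
    (hr1 : 1 < r 1) (hrN1 : r (N - 1) < 1) :
    (π 1 < 1 / (N : ℝ) → 1 / (N : ℝ) < 1 - π (N - 1)) ∧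
    (1 - π (N - 1) < 1 / (N : ℝ) → 1 / (N : ℝ) < π 1) ∧
    ¬(π 1 < 1 / (N : ℝ) ∧ 1 - π (N - 1) < 1 / (N : ℝ)) := by
  have hN1 : 1 ≤ N - 1 := by omega
  set P : ℕ → ℝ := fun j => ∏ k ∈ Icc 1 j, (r k)⁻¹
  set S := 1 + ∑ j ∈ Icc 1 (N - 1), P j
  have hpos : ∀ k ∈ Icc 1 (N - 1), 0 < r k := fun k hk => hrpos k (mem_Icc.1 hk).1 (mem_Icc.1 hk).2
  have hstay := lt_one_of_lt_one_of_affine_gap hr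
    (fun i hi hiN => fitnessB_pos hc hd.le hw0 hw1 hi (by omega)) fitness_gap_sub hN1 hr1 hrN1
  have hP1 : P 1 < 1 := by simpa [P] using inv_lt_one_of_one_lt₀ hr1
  have hSlt : S < N * max 1 (P (N - 1)) := by
    have := one_add_sum_lt_mul (le_max_left 1 (P (N - 1)))
      (fun j hj => prod_inv_le_max hpos hstay (mem_Icc.1 hj).2)
      ⟨1, mem_Icc.2 ⟨le_rfl, hN1⟩, hP1.trans_le (le_max_left _ _)⟩
    rwa [Nat.cast_sub (by omega), Nat.cast_one, sub_add_cancel] at this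
  have hS : 0 < S := by
    have : 0 ≤ ∑ j ∈ Icc 1 (N - 1), P j := sum_nonneg fun j hj =>
      (prod_pos fun k hk => inv_pos.2 (hpos k (Icc_subset_Icc_right (mem_Icc.1 hj).2 hk))).le
    linarith
  have hρA : π 1 = 1 / S := by simp [hπ 1 le_rfl hN1, S, P]
  have hρB : 1 - π (N - 1) = P (N - 1) / S := by
    rw [hπ (N - 1) hN1 le_rfl]
    exact one_sub_div_sum_Icc_pred hN1 hS.ne'
  have hmax := one_div_lt_or_one_div_lt (by positivity) hS hSlt
  rw [← hρA, ← hρB] at hmax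
  exact ⟨fun hA => hmax.resolve_left (lt_asymm hA), fun hB => hmax.resolve_right (lt_asymm hB),
    fun ⟨hA, hB⟩ => hmax.elim (lt_asymm hA) (lt_asymm hB)⟩

/-- if r_1 > 1 and r_{N-1} < 1 then ρ_A < 1/N implies ρ_B > 1/N,
ρ_B < 1/N implies ρ_A > 1/N; in particular ρ_A < 1/N and ρ_B < 1/N cannot both hold. -/
theorem moran_mutual_invasion_forbidden_scenario
    (N : ℕ) (hN : 3 ≤ N) (a b c d w : ℝ)
    (ha : 0 < a) (hb : 0 < b) (hc : 0 < c) (hd : 0 < d)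
    (hw0 : 0 ≤ w) (hw1 : w ≤ 1)
    (r : ℕ → ℝ)
    (hr : ∀ i, 1 ≤ i → i ≤ N - 1 →
      r i = (1 - w + w * (a * ((i : ℝ) - 1) / ((N : ℝ) - 1) +
                b * ((N : ℝ) - (i : ℝ)) / ((N : ℝ) - 1))) /
            (1 - w + w * (c * (i : ℝ) / ((N : ℝ) - 1) +
                d * ((N : ℝ) - (i : ℝ) - 1) / ((N : ℝ) - 1))))
    (hrpos : ∀ i, 1 ≤ i → i ≤ N - 1 → 0 < r i)
    (π : ℕ → ℝ) (hπ0 : π 0 = 0) (hπN : π N = 1)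
    (hπ : ∀ i, 1 ≤ i → i ≤ N - 1 →
      π i = (1 + ∑ j ∈ Finset.Icc 1 (i - 1), ∏ k ∈ Finset.Icc 1 j, (r k)⁻¹) /
            (1 + ∑ j ∈ Finset.Icc 1 (N - 1), ∏ k ∈ Finset.Icc 1 j, (r k)⁻¹))
    (hr1 : 1 < r 1) (hrN1 : r (N - 1) < 1) :
    (π 1 < 1 / (N : ℝ) → 1 / (N : ℝ) < 1 - π (N - 1)) ∧
    (1 - π (N - 1) < 1 / (N : ℝ) → 1 / (N : ℝ) < π 1) ∧
    ¬(π 1 < 1 / (N : ℝ) ∧ 1 - π (N - 1) < 1 / (N : ℝ)) :=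
  moran_mutual_invasion_forbidden_scenario_general N hN a b c d w hc hd hw0 hw1 r hr hrpos π hπ hr1
    hrN1
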